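/- arXiv:1602.05726 — 3 statements merged into one kernel-verified Lean document; each statement's English description precedes it below -/
import Mathlib

section
/- Let 1 ≤ p < q < ∞, u ∈ L^p + L^q, and Γ_u = {x : |u(x)| > 1}. Then ‖u‖_{L^q(ℝ^N ∖ Γ_u)} − 1 ≤ ‖u‖_{L^p+L^q} and (1 + |Γ_u|^{1/r})^{-1} ‖u‖_{L^p(Γ_u)} ≤ ‖u‖_{L^p+L^q}, where r = pq/(q−p) and |Γ_u| denotes the Lebesgue measure of Γ_u. -/
/-!
Split `u = u₁ + u₂` with `u₁ ∈ Lᵖ`, `u₂ ∈ L^q`; it suffices to bound both left-hand sides by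
`‖u₁‖_p + ‖u₂‖_q` and take the infimum. Off `Γ_u` we have `|u| ≤ min 1 |u₁| + |u₂|`, and since
`p ≤ q`, `∫ (min 1 |u₁|)^q ≤ ∫ |u₁|^p`, whence `‖min 1 |u₁|‖_q ≤ max 1 ‖u₁‖_p ≤ 1 + ‖u₁‖_p`.
On `Γ_u`, which has finite measure by Chebyshev, Hölder gives
`‖u₂‖_{Lᵖ(Γ_u)} ≤ |Γ_u|^{1/p - 1/q} ‖u₂‖_q`, and `1/r = 1/p - 1/q`.
-/

open MeasureTheory
open scoped ENNReal

/-- Gagliardo seminorm squared: `[u]² = ∬ |u(x)-u(y)|²/|x-y|^{N+2s} dx dy`. -/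
noncomputable def gag (N : ℕ) (s : ℝ) (u : EuclideanSpace ℝ (Fin N) → ℝ) : ENNReal :=
  ∫⁻ x, ∫⁻ y, ENNReal.ofReal (|u x - u y| ^ 2 / ‖x - y‖ ^ ((N : ℝ) + 2 * s))

/-- Norm of the sum space `L^p + L^q` on `ℝ^N`. -/
noncomputable def sumNorm (N : ℕ) (p q : ℝ) (u : EuclideanSpace ℝ (Fin N) → ℝ) : ℝ :=
  sInf {r : ℝ | ∃ u₁ u₂ : EuclideanSpace ℝ (Fin N) → ℝ, u = u₁ + u₂ ∧
    MemLp u₁ (ENNReal.ofReal p) volume ∧ MemLp u₂ (ENNReal.ofReal q) volume ∧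
    r = (eLpNorm u₁ (ENNReal.ofReal p) volume).toReal +
        (eLpNorm u₂ (ENNReal.ofReal q) volume).toReal}

/-- Gagliardo bilinear form `∬ (u(x)-u(y))(v(x)-v(y))/|x-y|^{N+2s} dx dy`. -/
noncomputable def gagForm (N : ℕ) (s : ℝ) (u v : EuclideanSpace ℝ (Fin N) → ℝ) : ℝ :=
  ∫ x, ∫ y, (u x - u y) * (v x - v y) / ‖x - y‖ ^ ((N : ℝ) + 2 * s)

section
variable {α E : Type*} [MeasurableSpace α] {μ : Measure α} [NormedAddCommGroup E]

lemma norm_add_le_min_one_add {a b : E} (h : ‖a + b‖ ≤ 1) : ‖a + b‖ ≤ min 1 ‖a‖ + ‖b‖ := by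
  rcases le_total 1 ‖a‖ with ha | ha
  · rw [min_eq_left ha]
    linarith [norm_nonneg b]
  · rw [min_eq_right ha]
    exact norm_add_le a b

lemma enorm_min_one_norm (a : E) : ‖min 1 ‖a‖‖ₑ = min 1 ‖a‖ₑ := by
  rw [Real.enorm_of_nonneg (by positivity), ENNReal.ofReal_min, ENNReal.ofReal_one, ofReal_norm]

lemma enorm_min_one_norm_rpow_le {p q : ℝ} (hp : 0 ≤ p) (hpq : p ≤ q) (a : E) :
    ‖min 1 ‖a‖‖ₑ ^ q ≤ ‖a‖ₑ ^ p := by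
  rw [enorm_min_one_norm]
  calc min 1 ‖a‖ₑ ^ q ≤ min 1 ‖a‖ₑ ^ p := ENNReal.rpow_le_rpow_of_exponent_ge (min_le_left _ _) hpq
    _ ≤ ‖a‖ₑ ^ p := ENNReal.rpow_le_rpow (min_le_right _ _) hp

lemma eLpNorm_min_one_norm_le_one_add {p q : ℝ≥0∞} (hp : p ≠ 0) (hpq : p ≤ q) (hq : q ≠ ∞)
    (f : α → E) :
    eLpNorm (fun x => min 1 ‖f x‖) q μ ≤ 1 + eLpNorm f p μ := by
  have hpt : p ≠ ∞ := ne_top_of_le_ne_top hq hpq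
  have hp_pos : 0 < p.toReal := ENNReal.toReal_pos hp hpt
  have hpq_real : p.toReal ≤ q.toReal := ENNReal.toReal_mono hq hpq
  rw [eLpNorm_eq_lintegral_rpow_enorm_toReal (ne_bot_of_le_ne_bot hp hpq) hq,
    eLpNorm_eq_lintegral_rpow_enorm_toReal hp hpt]
  set I := ∫⁻ x, ‖f x‖ₑ ^ p.toReal ∂μ
  have hI : ∫⁻ x, ‖min 1 ‖f x‖‖ₑ ^ q.toReal ∂μ ≤ I :=
    lintegral_mono fun x => enorm_min_one_norm_rpow_le hp_pos.le hpq_real (f x)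
  grw [hI]
  rcases le_total I 1 with hI1 | hI1
  · exact (ENNReal.rpow_le_one hI1 (by positivity)).trans le_self_add
  · calc I ^ (1 / q.toReal) ≤ I ^ (1 / p.toReal) :=
          ENNReal.rpow_le_rpow_of_exponent_le hI1 (one_div_le_one_div_of_le hp_pos hpq_real)
      _ ≤ 1 + I ^ (1 / p.toReal) := le_add_self

lemma eLpNorm_add_le_one_add_of_norm_add_le_one {p q : ℝ≥0∞} (hp : p ≠ 0) (hpq : p ≤ q)
    (hq1 : 1 ≤ q) (hq : q ≠ ∞) {f g : α → E} (hf : AEStronglyMeasurable f μ)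
    (hg : AEStronglyMeasurable g μ) (h : ∀ᵐ x ∂μ, ‖f x + g x‖ ≤ 1) :
    eLpNorm (f + g) q μ ≤ 1 + eLpNorm f p μ + eLpNorm g q μ :=
  calc eLpNorm (f + g) q μ ≤ eLpNorm ((fun x => min 1 ‖f x‖) + fun x => ‖g x‖) q μ :=
        eLpNorm_mono_ae_real (h.mono fun x hx => norm_add_le_min_one_add hx)
    _ ≤ eLpNorm (fun x => min 1 ‖f x‖) q μ + eLpNorm (fun x => ‖g x‖) q μ :=
        eLpNorm_add_le (aestronglyMeasurable_const.inf hf.norm) hg.norm hq1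
    _ ≤ 1 + eLpNorm f p μ + eLpNorm g q μ := by
        rw [eLpNorm_norm]
        gcongr
        exact eLpNorm_min_one_norm_le_one_add hp hpq hq f

lemma measure_one_lt_norm_add_lt_top {p q : ℝ≥0∞} (hp : p ≠ 0) (hpt : p ≠ ∞) (hq : q ≠ 0)
    (hqt : q ≠ ∞) {f g : α → E} (hf : MemLp f p μ) (hg : MemLp g q μ) :
    μ {x | 1 < ‖(f + g) x‖} < ∞ := by
  have hsub : {x | 1 < ‖(f + g) x‖} ⊆ {x | 2⁻¹ ≤ ‖f x‖₊} ∪ {x | 2⁻¹ ≤ ‖g x‖₊} := by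
    intro x hx
    by_contra hcon
    simp only [Set.mem_union, Set.mem_ofPred_eq, Pi.add_apply, not_or, not_le] at hx hcon
    have hf2 : ‖f x‖ < 2⁻¹ := by exact_mod_cast hcon.1
    have hg2 : ‖g x‖ < 2⁻¹ := by exact_mod_cast hcon.2
    linarith [norm_add_le (f x) (g x)]
  refine (measure_mono hsub).trans_lt ((measure_union_le _ _).trans_lt ?_)
  exact ENNReal.add_lt_top.2 ⟨hf.meas_ge_lt_top hp hpt (by norm_num),
    hg.meas_ge_lt_top hq hqt (by norm_num)⟩

lemma eLpNorm_add_restrict_le_eLpNorm_add_mul_rpow_measure {p q : ℝ≥0∞} (hp1 : 1 ≤ p)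
    (hpq : p ≤ q) {f g : α → E} (hf : AEStronglyMeasurable f μ) (hg : AEStronglyMeasurable g μ)
    (s : Set α) :
    eLpNorm (f + g) p (μ.restrict s)
      ≤ eLpNorm f p μ + eLpNorm g q μ * μ s ^ (1 / p.toReal - 1 / q.toReal) :=
  calc eLpNorm (f + g) p (μ.restrict s)
      ≤ eLpNorm f p (μ.restrict s) + eLpNorm g p (μ.restrict s) :=
        eLpNorm_add_le hf.restrict hg.restrict hp1
    _ ≤ eLpNorm f p μ + eLpNorm g q (μ.restrict s) * μ s ^ (1 / p.toReal - 1 / q.toReal) := by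
        refine add_le_add (eLpNorm_mono_measure _ Measure.restrict_le_self) ?_
        simpa using eLpNorm_le_eLpNorm_mul_rpow_measure_univ hpq hg.restrict
    _ ≤ eLpNorm f p μ + eLpNorm g q μ * μ s ^ (1 / p.toReal - 1 / q.toReal) := by
        grw [eLpNorm_mono_measure g (Measure.restrict_le_self (s := s))]

lemma toReal_eLpNorm_restrict_compl_one_lt_norm_sub_one_le {p q : ℝ≥0∞} (hp : p ≠ 0) (hpq : p ≤ q)
    (hq1 : 1 ≤ q) (hq : q ≠ ∞) {f g : α → E} (hf : MemLp f p μ) (hg : MemLp g q μ) :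
    (eLpNorm (f + g) q (μ.restrict {x | 1 < ‖(f + g) x‖}ᶜ)).toReal - 1
      ≤ (eLpNorm f p μ).toReal + (eLpNorm g q μ).toReal := by
  have hΓ : NullMeasurableSet {x | 1 < ‖(f + g) x‖} μ :=
    nullMeasurableSet_lt aemeasurable_const (hf.1.add hg.1).norm.aemeasurable
  have hle_one : ∀ᵐ x ∂μ.restrict {x | 1 < ‖(f + g) x‖}ᶜ, ‖f x + g x‖ ≤ 1 := by
    filter_upwards [ae_restrict_mem₀ hΓ.compl] with x hx using not_lt.1 hx
  have h := eLpNorm_add_le_one_add_of_norm_add_le_one hp hpq hq1 hq hf.1.restrict hg.1.restrict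
    hle_one
  grw [eLpNorm_mono_measure f Measure.restrict_le_self,
    eLpNorm_mono_measure g Measure.restrict_le_self] at h
  have h_real := ENNReal.toReal_mono (by finiteness) h
  rw [ENNReal.toReal_add (by finiteness) (by finiteness), ENNReal.toReal_add (by finiteness)
    (by finiteness), ENNReal.toReal_one] at h_real
  linarith

lemma inv_one_add_mul_toReal_eLpNorm_restrict_one_lt_norm_le {p q : ℝ≥0∞} (hp1 : 1 ≤ p)
    (hpq : p ≤ q) (hq : q ≠ ∞) {f g : α → E} (hf : MemLp f p μ) (hg : MemLp g q μ) :
    (1 + (μ {x | 1 < ‖(f + g) x‖}).toReal ^ (1 / p.toReal - 1 / q.toReal))⁻¹ *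
        (eLpNorm (f + g) p (μ.restrict {x | 1 < ‖(f + g) x‖})).toReal
      ≤ (eLpNorm f p μ).toReal + (eLpNorm g q μ).toReal := by
  have hp : p ≠ 0 := (zero_lt_one.trans_le hp1).ne'
  have hpt : p ≠ ∞ := ne_top_of_le_ne_top hq hpq
  have hexp : 0 ≤ 1 / p.toReal - 1 / q.toReal :=
    sub_nonneg.2 <|
      one_div_le_one_div_of_le (ENNReal.toReal_pos hp hpt) (ENNReal.toReal_mono hq hpq)
  -- `toReal` would send an infinite right-hand side to `0`.
  have hΓ := measure_one_lt_norm_add_lt_top hp hpt (ne_bot_of_le_ne_bot hp hpq) hq hf hg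
  have h := ENNReal.toReal_mono (by finiteness)
    (eLpNorm_add_restrict_le_eLpNorm_add_mul_rpow_measure hp1 hpq hf.1 hg.1 {x | 1 < ‖(f + g) x‖})
  rw [ENNReal.toReal_add (by finiteness) (by finiteness), ENNReal.toReal_mul,
    ← ENNReal.toReal_rpow] at h
  set t := (μ {x | 1 < ‖(f + g) x‖}).toReal ^ (1 / p.toReal - 1 / q.toReal)
  have ht : 0 ≤ t := by positivity
  rw [inv_mul_le_iff₀ (by positivity)]
  nlinarith [ENNReal.toReal_nonneg (a := eLpNorm f p μ), ENNReal.toReal_nonneg (a := eLpNorm g q μ)]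

end

lemma le_sumNorm {N : ℕ} {p q c : ℝ} {u : EuclideanSpace ℝ (Fin N) → ℝ}
    (hu : ∃ u₁ u₂ : EuclideanSpace ℝ (Fin N) → ℝ, u = u₁ + u₂ ∧
      MemLp u₁ (ENNReal.ofReal p) volume ∧ MemLp u₂ (ENNReal.ofReal q) volume)
    (h : ∀ u₁ u₂ : EuclideanSpace ℝ (Fin N) → ℝ, u = u₁ + u₂ →
      MemLp u₁ (ENNReal.ofReal p) volume → MemLp u₂ (ENNReal.ofReal q) volume →
      c ≤ (eLpNorm u₁ (ENNReal.ofReal p) volume).toReal +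
        (eLpNorm u₂ (ENNReal.ofReal q) volume).toReal) :
    c ≤ sumNorm N p q u := by
  obtain ⟨u₁, u₂, hu, h₁, h₂⟩ := hu
  exact le_csInf ⟨_, u₁, u₂, hu, h₁, h₂, rfl⟩ fun r ⟨v₁, v₂, hv, hv₁, hv₂, hr⟩ =>
    hr ▸ h v₁ v₂ hv hv₁ hv₂

/-- Lower bounds for the `L^p+L^q` norm: with `Γ_u = {|u|>1}` and `r = pq/(q-p)`,
`‖u‖_{L^q(Γ_uᶜ)} - 1 ≤ ‖u‖` and `(1+|Γ_u|^{1/r})⁻¹ ‖u‖_{L^p(Γ_u)} ≤ ‖u‖`. -/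
theorem sumNorm_lower_bounds (N : ℕ) (p q : ℝ) (hp : 1 ≤ p) (hpq : p < q)
    (u : EuclideanSpace ℝ (Fin N) → ℝ)
    (hu : ∃ u₁ u₂ : EuclideanSpace ℝ (Fin N) → ℝ, u = u₁ + u₂ ∧
      MemLp u₁ (ENNReal.ofReal p) volume ∧ MemLp u₂ (ENNReal.ofReal q) volume) :
    (eLpNorm u (ENNReal.ofReal q) (volume.restrict {x | 1 < |u x|}ᶜ)).toReal - 1
      ≤ sumNorm N p q u ∧
    (1 + (volume {x | 1 < |u x|}).toReal ^ (1 / (p * q / (q - p))))⁻¹ *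
        (eLpNorm u (ENNReal.ofReal p) (volume.restrict {x | 1 < |u x|})).toReal
      ≤ sumNorm N p q u := by
  have hp0 : 0 < p := by linarith
  have hP1 : 1 ≤ ENNReal.ofReal p := ENNReal.one_le_ofReal.2 hp
  have hPQ : ENNReal.ofReal p ≤ ENNReal.ofReal q := ENNReal.ofReal_le_ofReal hpq.le
  have hexp : 1 / (p * q / (q - p))
      = 1 / (ENNReal.ofReal p).toReal - 1 / (ENNReal.ofReal q).toReal := by
    rw [ENNReal.toReal_ofReal hp0.le, ENNReal.toReal_ofReal (by linarith)]
    have hq0 : q ≠ 0 := by linarith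
    have hqp : q - p ≠ 0 := by linarith
    field_simp
  constructor
  · refine le_sumNorm hu fun u₁ u₂ hu h₁ h₂ => ?_
    subst hu
    simpa only [Real.norm_eq_abs] using toReal_eLpNorm_restrict_compl_one_lt_norm_sub_one_le
      (by positivity) hPQ (hP1.trans hPQ) ENNReal.ofReal_ne_top h₁ h₂
  · refine le_sumNorm hu fun u₁ u₂ hu h₁ h₂ => ?_
    subst hu
    rw [hexp]
    simpa only [Real.norm_eq_abs] using
      inv_one_add_mul_toReal_eLpNorm_restrict_one_lt_norm_le hP1 hPQ ENNReal.ofReal_ne_top h₁ h₂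
end

section
/- Let g ∈ C¹(ℝ) satisfy |g'(t)| ≤ c₁|t|^{q−1} for |t| ≤ 1 and |g'(t)| ≤ c₁|t|^{p−1} for |t| ≥ 1, with 2 < p < q. Suppose v_j = t_j u_j with t_j = [v_j] → 0, [u_j] = 1, and {u_j} bounded in L^p + L^q, and [v_j]² = ∫ g'(v_j)v_j dx (Nehari identity). Then 1 ≤ c₁ t_j^{q−2} ∫_{|u_j| ≤ 1} |u_j|^q dx + 2c₁ t_j^{p−2} ∫_{|u_j| > 1} |u_j|^p dx, which yields a contradiction as j → ∞; hence inf{[v]² : v ∈ N} > 0 where N is the Nehari manifold. -/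
/-
Hedberg's pointwise argument gives the fractional Sobolev inequality `‖v‖²_{2*} ≤ K [v]²`,
`2* = 2N/(N - 2s)`. Comparing `v x` with the mean of `v` on the ball `B(x, t)`, the oscillation
is controlled by the Gagliardo density `D x = ∫ |v x - v y|² / |x - y|^(N+2s) dy` and the mean by
Hölder's inequality: `|v x| ≤ C (t^s (D x)^(1/2) + t^(-N/2*) ‖v‖_{2*})`. Optimizing in `t` gives
`|v x|^(2*) ≤ K ‖v‖_{2*}^(2* - 2) D x`, and integrating in `x` gives the inequality.

As `p ≤ 2* ≤ q`, the growth bounds on `g'` give `|g'(t) t| ≤ c₁ |t|^(2*)`, so on the Nehari manifold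
`[v]² = ∫ g'(v) v ≤ c₁ ‖v‖_{2*}^(2*) ≤ c₁ (K [v]²)^(2*/2)`; since `2* > 2`, `[v]²` is bounded below.
-/

open MeasureTheory Filter
open scoped ENNReal

noncomputable def fracSobolevExponent (N : ℕ) (s : ℝ) : ℝ := 2 * N / ((N : ℝ) - 2 * s)

theorem two_lt_fracSobolevExponent {N : ℕ} {s : ℝ} (hs : 0 < s) (hN : 2 * s < N) :
    2 < fracSobolevExponent N s := by
  rw [fracSobolevExponent, lt_div_iff₀ (by linarith)]
  linarith

theorem Real.rpow_div_two_sq {x : ℝ} (hx : 0 ≤ x) (e : ℝ) : (x ^ (e / 2)) ^ 2 = x ^ e := by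
  rw [← Real.rpow_natCast, ← Real.rpow_mul hx]
  norm_num

theorem rpow_le_of_forall_le_add_rpow {a X Y β γ : ℝ} (ha : 0 ≤ a) (hX : 0 ≤ X) (hY : 0 < Y)
    (hβ : 0 < β) (hγ : 0 < γ) (h : ∀ t : ℝ, 0 < t → a ≤ X * t ^ β + Y * t ^ (-γ)) :
    a ^ (1 + β / γ) ≤ 2 ^ (1 + β / γ) * X * Y ^ (β / γ) := by
  have hratio : 0 < β / γ := div_pos hβ hγ
  rcases ha.eq_or_lt with rfl | ha
  · rw [Real.zero_rpow (by positivity)]; positivity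
  -- the radius at which the second term equals `a / 2`
  set t := (2 * Y / a) ^ γ⁻¹ with ht
  have hbase : 0 < 2 * Y / a := by positivity
  have hsecond : Y * t ^ (-γ) = a / 2 := by
    rw [ht, ← Real.rpow_mul hbase.le, inv_mul_eq_div, neg_div, div_self hγ.ne',
      Real.rpow_neg_one, inv_div]
    field_simp
  have hfirst : t ^ β = (2 * Y) ^ (β / γ) / a ^ (β / γ) := by
    rw [ht, ← Real.rpow_mul hbase.le, inv_mul_eq_div, Real.div_rpow (by positivity) ha.le]
  have key : a / 2 ≤ X * ((2 * Y) ^ (β / γ) / a ^ (β / γ)) := by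
    have := h t (by positivity)
    rw [hsecond, hfirst] at this
    linarith
  have haratio : 0 < a ^ (β / γ) := by positivity
  rw [Real.rpow_add ha, Real.rpow_one, Real.rpow_add two_pos, Real.rpow_one]
  rw [Real.mul_rpow zero_le_two hY.le, mul_div_assoc', le_div_iff₀ haratio] at key
  nlinarith

theorem le_of_le_mul_rpow {T A ρ : ℝ} (hT : 0 < T) (hA : 0 < A) (hρ : 1 < ρ)
    (h : T ≤ A * T ^ ρ) : A⁻¹ ^ (ρ - 1)⁻¹ ≤ T := by
  have hρ1 : 0 < ρ - 1 := sub_pos.mpr hρ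
  have hpow : A⁻¹ ≤ T ^ (ρ - 1) := by
    rw [inv_le_iff_one_le_mul₀' hA, Real.rpow_sub hT, Real.rpow_one, mul_div_assoc',
      one_le_div hT]
    exact h
  calc A⁻¹ ^ (ρ - 1)⁻¹ ≤ (T ^ (ρ - 1)) ^ (ρ - 1)⁻¹ :=
        Real.rpow_le_rpow (by positivity) hpow (by positivity)
    _ = T := by rw [← Real.rpow_mul hT.le, mul_inv_cancel₀ hρ1.ne', Real.rpow_one]

theorem abs_mul_le_rpow_of_growth {p q r c₁ : ℝ} {g' : ℝ → ℝ} (hc₁ : 0 ≤ c₁) (hpr : p ≤ r)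
    (hrq : r ≤ q) (hbig : ∀ t : ℝ, 1 ≤ |t| → |g' t| ≤ c₁ * |t| ^ (p - 1))
    (hsmall : ∀ t : ℝ, |t| ≤ 1 → |g' t| ≤ c₁ * |t| ^ (q - 1)) (t : ℝ) :
    |g' t * t| ≤ c₁ * |t| ^ r := by
  rcases eq_or_ne t 0 with rfl | ht
  · simp only [mul_zero, abs_zero]; positivity
  have ht' : 0 < |t| := abs_pos.mpr ht
  have hmul : ∀ e : ℝ, |g' t| ≤ c₁ * |t| ^ (e - 1) → |g' t * t| ≤ c₁ * |t| ^ e := fun e he => by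
    calc |g' t * t| = |g' t| * |t| := abs_mul _ _
      _ ≤ c₁ * |t| ^ (e - 1) * |t| ^ (1 : ℝ) := by rw [Real.rpow_one]; gcongr
      _ = c₁ * |t| ^ e := by rw [mul_assoc, ← Real.rpow_add ht', sub_add_cancel]
  rcases le_total |t| 1 with hle | hge
  · exact (hmul q (hsmall t hle)).trans
      (mul_le_mul_of_nonneg_left (Real.rpow_le_rpow_of_exponent_ge ht' hle hrq) hc₁)
  · exact (hmul p (hbig t hge)).trans
      (mul_le_mul_of_nonneg_left (Real.rpow_le_rpow_of_exponent_le hge hpr) hc₁)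

noncomputable def gagDensity (N : ℕ) (s : ℝ) (u : EuclideanSpace ℝ (Fin N) → ℝ)
    (x : EuclideanSpace ℝ (Fin N)) : ℝ≥0∞ :=
  ∫⁻ y, ENNReal.ofReal (|u x - u y| ^ 2 / ‖x - y‖ ^ ((N : ℝ) + 2 * s))

section Hedberg

variable {N : ℕ} {s : ℝ} {u : EuclideanSpace ℝ (Fin N) → ℝ}

theorem gag_eq_lintegral_gagDensity : gag N s u = ∫⁻ x, gagDensity N s u x := rfl

theorem setLIntegral_ball_enorm_sub_sq_le (hκ : 0 ≤ (N : ℝ) + 2 * s)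
    (x : EuclideanSpace ℝ (Fin N)) (t : ℝ) :
    ∫⁻ y in Metric.ball x t, ‖u x - u y‖ₑ ^ (2 : ℝ)
      ≤ ENNReal.ofReal (t ^ ((N : ℝ) + 2 * s)) * gagDensity N s u x := by
  set κ := (N : ℝ) + 2 * s
  have hpt : ∀ y ∈ Metric.ball x t, ‖u x - u y‖ₑ ^ (2 : ℝ)
      ≤ ENNReal.ofReal (t ^ κ) * ENNReal.ofReal (|u x - u y| ^ 2 / ‖x - y‖ ^ κ) := by
    intro y hy
    have ht : 0 < t := Metric.pos_of_mem_ball hy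
    rw [Real.enorm_eq_ofReal_abs, ENNReal.ofReal_rpow_of_nonneg (abs_nonneg _) zero_le_two,
      Real.rpow_two, ← ENNReal.ofReal_mul (by positivity)]
    refine ENNReal.ofReal_le_ofReal ?_
    rcases eq_or_ne y x with rfl | hyx
    · simp
    have hdist : 0 < ‖x - y‖ := norm_pos_iff.mpr (sub_ne_zero.mpr hyx.symm)
    have hw : ‖x - y‖ ^ κ ≤ t ^ κ := by
      rw [Metric.mem_ball, dist_comm, dist_eq_norm] at hy
      exact Real.rpow_le_rpow hdist.le hy.le hκ
    rw [mul_div_assoc', le_div_iff₀ (by positivity), mul_comm]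
    gcongr
  calc ∫⁻ y in Metric.ball x t, ‖u x - u y‖ₑ ^ (2 : ℝ)
      ≤ ∫⁻ y in Metric.ball x t,
          ENNReal.ofReal (t ^ κ) * ENNReal.ofReal (|u x - u y| ^ 2 / ‖x - y‖ ^ κ) :=
        setLIntegral_mono' measurableSet_ball hpt
    _ = ENNReal.ofReal (t ^ κ) *
          ∫⁻ y in Metric.ball x t, ENNReal.ofReal (|u x - u y| ^ 2 / ‖x - y‖ ^ κ) :=
        lintegral_const_mul' _ _ ENNReal.ofReal_ne_top
    _ ≤ ENNReal.ofReal (t ^ κ) * gagDensity N s u x := by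
        gcongr
        exact setLIntegral_le_lintegral _ _

theorem enorm_mul_volume_ball_le {r : ℝ} (hr : 1 ≤ r) (hκ : 0 ≤ (N : ℝ) + 2 * s)
    (hu : AEStronglyMeasurable u volume) (x : EuclideanSpace ℝ (Fin N)) (t : ℝ) :
    ‖u x‖ₑ * volume (Metric.ball x t)
      ≤ (ENNReal.ofReal (t ^ ((N : ℝ) + 2 * s)) * gagDensity N s u x) ^ (2⁻¹ : ℝ) *
          volume (Metric.ball x t) ^ (2⁻¹ : ℝ) +
        eLpNorm u (ENNReal.ofReal r) volume * volume (Metric.ball x t) ^ (1 - r⁻¹) := by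
  set μ := volume.restrict (Metric.ball x t)
  have hμ : μ Set.univ = volume (Metric.ball x t) := Measure.restrict_apply_univ _
  have huμ : AEStronglyMeasurable u μ := hu.restrict
  have hdiff : AEStronglyMeasurable (fun y => u x - u y) μ := aestronglyMeasurable_const.sub huμ
  have hconst : ‖u x‖ₑ * volume (Metric.ball x t) = eLpNorm (fun _ => u x) 1 μ := by
    rw [eLpNorm_const' _ one_ne_zero ENNReal.one_ne_top, hμ]; simp
  have hsplit : (fun _ => u x) = (fun y => u x - u y) + u := by
    funext y; simp
  have hosc : eLpNorm (fun y => u x - u y) 2 μ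
      ≤ (ENNReal.ofReal (t ^ ((N : ℝ) + 2 * s)) * gagDensity N s u x) ^ (2⁻¹ : ℝ) := by
    rw [eLpNorm_eq_lintegral_rpow_enorm_toReal two_ne_zero ENNReal.ofNat_ne_top]
    simp only [ENNReal.toReal_ofNat, one_div]
    gcongr
    exact setLIntegral_ball_enorm_sub_sq_le hκ x t
  have hmean : eLpNorm u (ENNReal.ofReal r) μ ≤ eLpNorm u (ENNReal.ofReal r) volume :=
    eLpNorm_mono_measure _ Measure.restrict_le_self
  calc ‖u x‖ₑ * volume (Metric.ball x t)
      ≤ eLpNorm (fun y => u x - u y) 1 μ + eLpNorm u 1 μ := by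
        rw [hconst, hsplit]; exact eLpNorm_add_le hdiff huμ le_rfl
    _ ≤ eLpNorm (fun y => u x - u y) 2 μ * μ Set.univ ^ (2⁻¹ : ℝ) +
          eLpNorm u (ENNReal.ofReal r) μ * μ Set.univ ^ (1 - r⁻¹) := by
        gcongr
        · exact (eLpNorm_le_eLpNorm_mul_rpow_measure_univ one_le_two hdiff).trans_eq
            (by norm_num)
        · exact (eLpNorm_le_eLpNorm_mul_rpow_measure_univ (ENNReal.one_le_ofReal.mpr hr)
            huμ).trans_eq (by rw [ENNReal.toReal_ofReal (zero_le_one.trans hr)]; simp)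
    _ ≤ _ := by rw [hμ]; gcongr

theorem abs_le_of_gagDensity_ne_top {r : ℝ} (hr : 1 ≤ r) (hκ : 0 ≤ (N : ℝ) + 2 * s)
    (hu : MemLp u (ENNReal.ofReal r) volume) {x : EuclideanSpace ℝ (Fin N)}
    (hx : gagDensity N s u x ≠ ⊤) {t : ℝ} (ht : 0 < t) :
    |u x| ≤ ((gagDensity N s u x).toReal /
          (volume (Metric.ball (0 : EuclideanSpace ℝ (Fin N)) 1)).toReal) ^ (2⁻¹ : ℝ) * t ^ s +
        (volume (Metric.ball (0 : EuclideanSpace ℝ (Fin N)) 1)).toReal ^ (-r⁻¹) *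
          (eLpNorm u (ENNReal.ofReal r) volume).toReal * t ^ (-(N / r)) := by
  set c := (volume (Metric.ball (0 : EuclideanSpace ℝ (Fin N)) 1)).toReal
  set d := (gagDensity N s u x).toReal
  set m := (eLpNorm u (ENNReal.ofReal r) volume).toReal
  have hc : 0 < c := ENNReal.toReal_pos (Metric.measure_ball_pos _ _ one_pos).ne'
    measure_ball_lt_top.ne
  set V := c * t ^ (N : ℝ)
  have hV : (volume (Metric.ball x t)).toReal = V := by
    rw [Measure.addHaar_ball_of_pos volume x ht, finrank_euclideanSpace_fin, ENNReal.toReal_mul,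
      ENNReal.toReal_ofReal (by positivity), ← Real.rpow_natCast, mul_comm]
  have hVpos : 0 < V := by positivity
  have hB : volume (Metric.ball x t) ≠ ⊤ := measure_ball_lt_top.ne
  have hosc_ne : (ENNReal.ofReal (t ^ ((N : ℝ) + 2 * s)) * gagDensity N s u x) ^ (2⁻¹ : ℝ) *
      volume (Metric.ball x t) ^ (2⁻¹ : ℝ) ≠ ⊤ :=
    ENNReal.mul_ne_top (ENNReal.rpow_ne_top_of_nonneg (by norm_num) (by finiteness))
      (ENNReal.rpow_ne_top_of_nonneg (by norm_num) hB)
  have hmean_ne : eLpNorm u (ENNReal.ofReal r) volume * volume (Metric.ball x t) ^ (1 - r⁻¹)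
      ≠ ⊤ :=
    ENNReal.mul_ne_top hu.eLpNorm_ne_top
      (ENNReal.rpow_ne_top_of_nonneg (sub_nonneg.mpr (inv_le_one_of_one_le₀ hr)) hB)
  have h := ENNReal.toReal_mono (ENNReal.add_ne_top.mpr ⟨hosc_ne, hmean_ne⟩)
    (enorm_mul_volume_ball_le hr hκ hu.1 x t)
  rw [ENNReal.toReal_add hosc_ne hmean_ne,
    ENNReal.toReal_mul, ENNReal.toReal_mul, ENNReal.toReal_mul, ← ENNReal.toReal_rpow,
    ← ENNReal.toReal_rpow, ← ENNReal.toReal_rpow, ENNReal.toReal_mul,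
    ENNReal.toReal_ofReal (by positivity), toReal_enorm, Real.norm_eq_abs, hV] at h
  have hosc : (t ^ ((N : ℝ) + 2 * s) * d) ^ (2⁻¹ : ℝ) * V ^ (2⁻¹ : ℝ)
      = (d / c) ^ (2⁻¹ : ℝ) * t ^ s * V := by
    have hsq : t ^ ((N : ℝ) + 2 * s) * d * V = d / c * (t ^ s * V) ^ 2 := by
      rw [Real.rpow_add ht, show 2 * s = s * (2 : ℕ) by push_cast; ring,
        Real.rpow_mul_natCast ht.le]
      field_simp
      simp only [V]
      ring
    rw [← Real.mul_rpow (by positivity) hVpos.le, hsq, Real.mul_rpow (by positivity)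
      (by positivity), ← Real.rpow_natCast, ← Real.rpow_mul (by positivity)]
    norm_num [mul_assoc]
  have hmean : m * V ^ (1 - r⁻¹) = c ^ (-r⁻¹) * m * t ^ (-(N / r)) * V := by
    rw [sub_eq_neg_add, Real.rpow_add_one hVpos.ne', Real.mul_rpow hc.le (by positivity),
      ← Real.rpow_mul ht.le]
    ring_nf
  rw [hosc, hmean, ← add_mul] at h
  exact le_of_mul_le_mul_right h hVpos

end Hedberg

section Sobolev

variable {N : ℕ} {s : ℝ} {u : EuclideanSpace ℝ (Fin N) → ℝ}

theorem abs_rpow_le_gagDensity (hs : 0 < s) (hN : 2 * s < N)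
    (hu : MemLp u (ENNReal.ofReal (fracSobolevExponent N s)) volume)
    (hu0 : eLpNorm u (ENNReal.ofReal (fracSobolevExponent N s)) volume ≠ 0)
    {x : EuclideanSpace ℝ (Fin N)} (hx : gagDensity N s u x ≠ ⊤) :
    |u x| ^ fracSobolevExponent N s
      ≤ 2 ^ fracSobolevExponent N s * ((gagDensity N s u x).toReal /
          (volume (Metric.ball (0 : EuclideanSpace ℝ (Fin N)) 1)).toReal) *
        ((volume (Metric.ball (0 : EuclideanSpace ℝ (Fin N)) 1)).toReal ^
          (-(fracSobolevExponent N s)⁻¹) *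
          (eLpNorm u (ENNReal.ofReal (fracSobolevExponent N s)) volume).toReal) ^
            (fracSobolevExponent N s - 2) := by
  set r := fracSobolevExponent N s with hr_def
  set c := (volume (Metric.ball (0 : EuclideanSpace ℝ (Fin N)) 1)).toReal
  set d := (gagDensity N s u x).toReal
  set m := (eLpNorm u (ENNReal.ofReal r) volume).toReal
  have hr : 2 < r := two_lt_fracSobolevExponent hs hN
  have hNd : (N : ℝ) - 2 * s ≠ 0 := by linarith
  have hNpos : (N : ℝ) ≠ 0 := by linarith
  have hc : 0 < c := ENNReal.toReal_pos (Metric.measure_ball_pos _ _ one_pos).ne'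
    measure_ball_lt_top.ne
  have hm : 0 < m := ENNReal.toReal_pos hu0 hu.eLpNorm_ne_top
  have hγ : (N : ℝ) / r = ((N : ℝ) - 2 * s) / 2 := by
    rw [hr_def, fracSobolevExponent]; field_simp
  have hratio : s / (N / r) = (r - 2) / 2 := by
    rw [hγ, hr_def, fracSobolevExponent, div_sub' hNd]; field_simp; ring
  have key := rpow_le_of_forall_le_add_rpow (abs_nonneg (u x)) (by positivity)
    (by positivity : 0 < c ^ (-r⁻¹) * m) hs (by rw [hγ]; positivity)
    fun t ht => abs_le_of_gagDensity_ne_top (by linarith) (by linarith) hu hx ht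
  rw [hratio, show 1 + (r - 2) / 2 = r / 2 by ring, inv_eq_one_div] at key
  have hsq := pow_le_pow_left₀ (by positivity) key 2
  rwa [Real.rpow_div_two_sq (abs_nonneg _), mul_pow, mul_pow, Real.rpow_div_two_sq zero_le_two,
    Real.rpow_div_two_sq (by positivity), Real.rpow_div_two_sq (by positivity), Real.rpow_one]
    at hsq

theorem sq_toReal_eLpNorm_le_gag (hs : 0 < s) (hN : 2 * s < N) :
    ∃ K > 0, ∀ u : EuclideanSpace ℝ (Fin N) → ℝ,
      MemLp u (ENNReal.ofReal (fracSobolevExponent N s)) volume → gag N s u ≠ ⊤ →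
      (eLpNorm u (ENNReal.ofReal (fracSobolevExponent N s)) volume).toReal ^ 2
        ≤ K * (gag N s u).toReal := by
  set r := fracSobolevExponent N s
  set c := (volume (Metric.ball (0 : EuclideanSpace ℝ (Fin N)) 1)).toReal
  have hr : 2 < r := two_lt_fracSobolevExponent hs hN
  have hc : 0 < c := ENNReal.toReal_pos (Metric.measure_ball_pos _ _ one_pos).ne'
    measure_ball_lt_top.ne
  refine ⟨2 ^ r * c⁻¹ * (c ^ (-r⁻¹)) ^ (r - 2), by positivity, fun u hu hfin => ?_⟩
  set m := (eLpNorm u (ENNReal.ofReal r) volume).toReal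
  by_cases hm0 : m = 0
  · rw [hm0, zero_pow two_ne_zero]; positivity
  have hm : 0 < m := lt_of_le_of_ne ENNReal.toReal_nonneg (Ne.symm hm0)
  set K := 2 ^ r * c⁻¹ * (c ^ (-r⁻¹)) ^ (r - 2)
  have hpt : ∀ x, ‖u x‖ₑ ^ r ≤ ENNReal.ofReal (K * m ^ (r - 2)) * gagDensity N s u x := by
    intro x
    by_cases hx : gagDensity N s u x = ⊤
    · rw [hx, ENNReal.mul_top (ENNReal.ofReal_pos.mpr (by positivity)).ne']; exact le_top
    rw [← ENNReal.ofReal_toReal hx, ← ENNReal.ofReal_mul (by positivity),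
      Real.enorm_eq_ofReal_abs, ENNReal.ofReal_rpow_of_nonneg (abs_nonneg _) (by linarith)]
    refine ENNReal.ofReal_le_ofReal ((abs_rpow_le_gagDensity hs hN hu
      (ENNReal.toReal_pos_iff.mp hm).1.ne' hx).trans_eq ?_)
    rw [Real.mul_rpow (by positivity) hm.le]
    ring
  have hint : eLpNorm u (ENNReal.ofReal r) volume ^ r
      ≤ ENNReal.ofReal (K * m ^ (r - 2)) * gag N s u := by
    have hpow := eLpNorm_nnreal_pow_eq_lintegral (μ := volume) (f := u)
      (Real.toNNReal_pos.mpr (by linarith : 0 < r)).ne'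
    rw [Real.coe_toNNReal _ (by linarith)] at hpow
    rw [gag_eq_lintegral_gagDensity, ← lintegral_const_mul' _ _ ENNReal.ofReal_ne_top]
    exact hpow.trans_le (lintegral_mono hpt)
  have hreal := ENNReal.toReal_mono (ENNReal.mul_ne_top ENNReal.ofReal_ne_top hfin) hint
  rw [ENNReal.toReal_mul, ENNReal.toReal_ofReal (by positivity), ← ENNReal.toReal_rpow] at hreal
  change m ^ r ≤ K * m ^ (r - 2) * (gag N s u).toReal at hreal
  have hsplit : m ^ r = m ^ 2 * m ^ (r - 2) := by
    rw [← Real.rpow_natCast, ← Real.rpow_add hm]; norm_num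
  rw [hsplit] at hreal
  nlinarith [Real.rpow_pos_of_pos hm (r - 2)]

end Sobolev

theorem integral_mul_le_eLpNorm_rpow {α : Type*} [MeasurableSpace α] {μ : Measure α}
    {g' : ℝ → ℝ} {r c₁ : ℝ} (hr : 0 < r) (hgrowth : ∀ t, |g' t * t| ≤ c₁ * |t| ^ r)
    {v : α → ℝ} (hv : MemLp v (ENNReal.ofReal r) μ)
    (hint : Integrable (fun x => g' (v x) * v x) μ) :
    ∫ x, g' (v x) * v x ∂μ ≤ c₁ * (eLpNorm v (ENNReal.ofReal r) μ).toReal ^ r := by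
  have hr' : ENNReal.ofReal r ≠ 0 := ENNReal.ofReal_pos.mpr hr |>.ne'
  have hvr := hv.integrable_norm_rpow hr' ENNReal.ofReal_ne_top
  rw [ENNReal.toReal_ofReal hr.le] at hvr
  calc ∫ x, g' (v x) * v x ∂μ ≤ ∫ x, c₁ * ‖v x‖ ^ r ∂μ :=
        integral_mono hint (hvr.const_mul c₁) fun x => (le_abs_self _).trans (hgrowth (v x))
    _ = c₁ * (eLpNorm v (ENNReal.ofReal r) μ).toReal ^ r := by
        rw [integral_const_mul, hv.eLpNorm_eq_integral_rpow_norm hr' ENNReal.ofReal_ne_top,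
          ENNReal.toReal_ofReal hr.le, ENNReal.toReal_ofReal (by positivity),
          Real.rpow_inv_rpow (integral_nonneg fun x => by positivity) hr.ne']

theorem nehari_seminorm_bounded_below_general (N : ℕ) (s p q c₁ : ℝ) (g' : ℝ → ℝ)
    (hs0 : 0 < s) (hNs : 2 * s < (N : ℝ))
    (hpc : p < 2 * N / ((N : ℝ) - 2 * s))
    (hcq : 2 * N / ((N : ℝ) - 2 * s) < q) (hc₁ : 0 < c₁)
    (hbig : ∀ t : ℝ, 1 ≤ |t| → |g' t| ≤ c₁ * |t| ^ (p - 1))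
    (hsmall : ∀ t : ℝ, |t| ≤ 1 → |g' t| ≤ c₁ * |t| ^ (q - 1)) :
    ∃ δ > 0, ∀ v : EuclideanSpace ℝ (Fin N) → ℝ,
      MemLp v (ENNReal.ofReal (2 * N / ((N : ℝ) - 2 * s))) volume →
      gag N s v ≠ ⊤ →
      ¬ (v =ᵐ[volume] (0 : EuclideanSpace ℝ (Fin N) → ℝ)) →
      Integrable (fun x => g' (v x) * v x) volume →
      (gag N s v).toReal = ∫ x, g' (v x) * v x →
      δ ≤ (gag N s v).toReal := by
  obtain ⟨K, hK, hsobolev⟩ := sq_toReal_eLpNorm_le_gag hs0 hNs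
  set r := fracSobolevExponent N s
  have hr : 2 < r := two_lt_fracSobolevExponent hs0 hNs
  refine ⟨(c₁ * K ^ (r / 2))⁻¹ ^ (r / 2 - 1)⁻¹, by positivity,
    fun v hv hfin hv0 hint hnehari => ?_⟩
  set T := (gag N s v).toReal
  set m := (eLpNorm v (ENNReal.ofReal r) volume).toReal
  have hm : 0 < m := ENNReal.toReal_pos
    (mt (eLpNorm_eq_zero_iff hv.1 (ENNReal.ofReal_pos.mpr (by linarith)).ne').mp hv0)
    hv.eLpNorm_ne_top
  have hsob : m ^ 2 ≤ K * T := hsobolev v hv hfin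
  have hT : 0 < T := pos_of_mul_pos_right ((pow_pos hm 2).trans_le hsob) hK.le
  have hgrowth := abs_mul_le_rpow_of_growth (r := r) hc₁.le hpc.le hcq.le hbig hsmall
  refine le_of_le_mul_rpow hT (by positivity) (by linarith) ?_
  calc T ≤ c₁ * m ^ r := hnehari ▸ integral_mul_le_eLpNorm_rpow (by positivity) hgrowth hv hint
    _ = c₁ * (m ^ 2) ^ (r / 2) := by
        rw [← Real.rpow_natCast, ← Real.rpow_mul hm.le, Nat.cast_ofNat,
          mul_div_cancel₀ r two_ne_zero]
    _ ≤ c₁ * (K * T) ^ (r / 2) := by gcongr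
    _ = c₁ * K ^ (r / 2) * T ^ (r / 2) := by rw [Real.mul_rpow hK.le hT.le, mul_assoc]

/-- Step 4: the Gagliardo seminorm is bounded away from zero on the Nehari manifold. -/
theorem nehari_seminorm_bounded_below (N : ℕ) (s p q c₁ : ℝ) (g g' : ℝ → ℝ)
    (hs0 : 0 < s) (hs1 : s < 1) (hNs : 2 * s < (N : ℝ))
    (hp : 2 < p) (hpc : p < 2 * N / ((N : ℝ) - 2 * s))
    (hcq : 2 * N / ((N : ℝ) - 2 * s) < q) (hc₁ : 0 < c₁)
    (hder : ∀ t, HasDerivAt g (g' t) t)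
    (hbig : ∀ t : ℝ, 1 ≤ |t| → |g' t| ≤ c₁ * |t| ^ (p - 1))
    (hsmall : ∀ t : ℝ, |t| ≤ 1 → |g' t| ≤ c₁ * |t| ^ (q - 1)) :
    ∃ δ > 0, ∀ v : EuclideanSpace ℝ (Fin N) → ℝ,
      MemLp v (ENNReal.ofReal (2 * N / ((N : ℝ) - 2 * s))) volume →
      gag N s v ≠ ⊤ →
      ¬ (v =ᵐ[volume] (0 : EuclideanSpace ℝ (Fin N) → ℝ)) →
      Integrable (fun x => g' (v x) * v x) volume →
      (gag N s v).toReal = ∫ x, g' (v x) * v x →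
      δ ≤ (gag N s v).toReal :=
  nehari_seminorm_bounded_below_general N s p q c₁ g' hs0 hNs hpc hcq hc₁ hbig hsmall
end

section
/- Let g ∈ C¹(ℝ) satisfy |g'(t)| ≤ c₁|t|^{p−1} for |t| ≥ 1 and |g'(t)| ≤ c₁|t|^{q−1} for |t| ≤ 1 with 2 < p < q. Then the map u ↦ g'(u) sends L^p + L^q boundedly into L^{p/(p−1)} ∩ L^{q/(q−1)}: if ‖u‖_{L^p+L^q} ≤ M then ‖g'(u)‖_{L^{p'}} + ‖g'(u)‖_{L^{q'}} ≤ C(M), where p' = p/(p−1), q' = q/(q−1). -/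
open MeasureTheory Filter

/-
On `{|u| > 1}` the growth bounds give `|g'(u)|^r ≤ c₁^r |u|^p`, on `{|u| ≤ 1}` they give
`|g'(u)|^r ≤ c₁^r |u|^q`, for every `r` between `q' = q/(q-1)` and `p' = p/(p-1)`. Hence
`|g'(u)|^r ≤ c₁^r min(|u|^p, |u|^q)`, and the minimum of the two powers is controlled by
`2^q (|u₁|^p + |u₂|^q)` for any splitting `u = u₁ + u₂`. Integrating and choosing a splitting
that almost realises the sum norm bounds `∫ |g'(u)|^r` in terms of `‖u‖_{L^p + L^q}`.
-/

lemma div_sub_one_le_div_sub_one {p q : ℝ} (hp : 1 < p) (hpq : p ≤ q) :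
    q / (q - 1) ≤ p / (p - 1) := by
  rw [div_le_div_iff₀ (by linarith) (by linarith)]
  linarith

lemma abs_rpow_le_mul_rpow_mul {x t c s r : ℝ} (hc : 0 ≤ c) (hr : 0 ≤ r)
    (hx : |x| ≤ c * |t| ^ s) : |x| ^ r ≤ c ^ r * |t| ^ (s * r) := by
  calc |x| ^ r ≤ (c * |t| ^ s) ^ r := Real.rpow_le_rpow (abs_nonneg _) hx hr
    _ = c ^ r * |t| ^ (s * r) := by
      rw [Real.mul_rpow hc (by positivity), ← Real.rpow_mul (abs_nonneg _)]

lemma abs_rpow_le_mul_min_of_growth {p q c r : ℝ} {f : ℝ → ℝ} (hp : 1 < p) (hpq : p ≤ q)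
    (hc : 0 ≤ c) (hbig : ∀ t : ℝ, 1 ≤ |t| → |f t| ≤ c * |t| ^ (p - 1))
    (hsmall : ∀ t : ℝ, |t| ≤ 1 → |f t| ≤ c * |t| ^ (q - 1))
    (hrq : q / (q - 1) ≤ r) (hrp : r ≤ p / (p - 1)) (t : ℝ) :
    |f t| ^ r ≤ c ^ r * min (|t| ^ p) (|t| ^ q) := by
  have hr : 0 ≤ r := (div_nonneg (by linarith) (by linarith)).trans hrq
  rcases le_total 1 |t| with ht | ht
  · rw [min_eq_left (Real.rpow_le_rpow_of_exponent_le ht hpq)]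
    have hexp : (p - 1) * r ≤ p := by rwa [le_div_iff₀' (by linarith)] at hrp
    calc |f t| ^ r ≤ c ^ r * |t| ^ ((p - 1) * r) := abs_rpow_le_mul_rpow_mul hc hr (hbig t ht)
      _ ≤ c ^ r * |t| ^ p := by gcongr
  · rw [min_eq_right (Real.rpow_le_rpow_of_exponent_ge' (abs_nonneg _) ht (by linarith) hpq)]
    have hexp : q ≤ (q - 1) * r := by rwa [div_le_iff₀' (by linarith)] at hrq
    calc |f t| ^ r ≤ c ^ r * |t| ^ ((q - 1) * r) := abs_rpow_le_mul_rpow_mul hc hr (hsmall t ht)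
      _ ≤ c ^ r * |t| ^ q := mul_le_mul_of_nonneg_left
        (Real.rpow_le_rpow_of_exponent_ge' (abs_nonneg _) ht (by linarith) hexp) (by positivity)

lemma abs_add_rpow_le_two_rpow_mul {a b s : ℝ} (hab : |b| ≤ |a|) (hs : 0 ≤ s) :
    |a + b| ^ s ≤ 2 ^ s * |a| ^ s := by
  calc |a + b| ^ s ≤ (2 * |a|) ^ s := by
        gcongr
        linarith [abs_add_le a b]
    _ = 2 ^ s * |a| ^ s := Real.mul_rpow zero_le_two (abs_nonneg _)

lemma min_rpow_abs_add_le {p q : ℝ} (hp : 0 ≤ p) (hpq : p ≤ q) (a b : ℝ) :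
    min (|a + b| ^ p) (|a + b| ^ q) ≤ 2 ^ q * (|a| ^ p + |b| ^ q) := by
  have h2 : (2 : ℝ) ^ p ≤ 2 ^ q := Real.rpow_le_rpow_of_exponent_le one_le_two hpq
  rcases le_total |b| |a| with hab | hba
  · calc min (|a + b| ^ p) (|a + b| ^ q) ≤ |a + b| ^ p := min_le_left _ _
      _ ≤ 2 ^ p * |a| ^ p := abs_add_rpow_le_two_rpow_mul hab hp
      _ ≤ 2 ^ q * (|a| ^ p + |b| ^ q) := by gcongr; exact le_add_of_nonneg_right (by positivity)
  · calc min (|a + b| ^ p) (|a + b| ^ q) ≤ |b + a| ^ q := by rw [add_comm]; exact min_le_right _ _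
      _ ≤ 2 ^ q * |b| ^ q := abs_add_rpow_le_two_rpow_mul hba (hp.trans hpq)
      _ ≤ 2 ^ q * (|a| ^ p + |b| ^ q) := by gcongr; exact le_add_of_nonneg_left (by positivity)

lemma abs_rpow_add_le_of_growth {p q c r : ℝ} {f : ℝ → ℝ} (hp : 1 < p) (hpq : p ≤ q)
    (hc : 0 ≤ c) (hbig : ∀ t : ℝ, 1 ≤ |t| → |f t| ≤ c * |t| ^ (p - 1))
    (hsmall : ∀ t : ℝ, |t| ≤ 1 → |f t| ≤ c * |t| ^ (q - 1))
    (hrq : q / (q - 1) ≤ r) (hrp : r ≤ p / (p - 1)) (a b : ℝ) :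
    |f (a + b)| ^ r ≤ c ^ r * 2 ^ q * (|a| ^ p + |b| ^ q) := by
  rw [mul_assoc]
  exact (abs_rpow_le_mul_min_of_growth hp hpq hc hbig hsmall hrq hrp _).trans
    (by gcongr; exact min_rpow_abs_add_le (by linarith) hpq a b)

section

variable {α : Type*} [MeasurableSpace α] {μ : Measure α}

lemma enorm_rpow_eq_ofReal_abs_rpow (x : ℝ) {r : ℝ} (hr : 0 ≤ r) :
    ‖x‖ₑ ^ r = ENNReal.ofReal (|x| ^ r) := by
  rw [Real.enorm_eq_ofReal_abs, ENNReal.ofReal_rpow_of_nonneg (abs_nonneg _) hr]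

lemma eLpNorm_ofReal_eq_lintegral {f : α → ℝ} {p : ℝ} (hp : 0 < p) :
    eLpNorm f (ENNReal.ofReal p) μ = (∫⁻ x, ‖f x‖ₑ ^ p ∂μ) ^ (1 / p) := by
  rw [eLpNorm_eq_lintegral_rpow_enorm_toReal (by simpa using hp) ENNReal.ofReal_ne_top,
    ENNReal.toReal_ofReal hp.le]

lemma lintegral_rpow_enorm_eq_eLpNorm_ofReal_rpow {f : α → ℝ} {p : ℝ} (hp : 0 < p) :
    ∫⁻ x, ‖f x‖ₑ ^ p ∂μ = eLpNorm f (ENNReal.ofReal p) μ ^ p := by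
  rw [eLpNorm_ofReal_eq_lintegral hp, ← ENNReal.rpow_mul, one_div_mul_cancel hp.ne',
    ENNReal.rpow_one]

lemma lintegral_rpow_enorm_comp_add_le {f : ℝ → ℝ} {p q r K : ℝ} (hp : 0 < p) (hq : 0 < q)
    (hr : 0 ≤ r) (hfK : ∀ a b, |f (a + b)| ^ r ≤ K * (|a| ^ p + |b| ^ q))
    {u₁ u₂ : α → ℝ} (hu₁ : AEMeasurable u₁ μ) :
    ∫⁻ x, ‖f (u₁ x + u₂ x)‖ₑ ^ r ∂μ ≤
      ENNReal.ofReal K *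
        (eLpNorm u₁ (ENNReal.ofReal p) μ ^ p + eLpNorm u₂ (ENNReal.ofReal q) μ ^ q) := by
  have hpointwise : ∀ x, ‖f (u₁ x + u₂ x)‖ₑ ^ r ≤
      ENNReal.ofReal K * (‖u₁ x‖ₑ ^ p + ‖u₂ x‖ₑ ^ q) := fun x => by
    rw [enorm_rpow_eq_ofReal_abs_rpow _ hr, enorm_rpow_eq_ofReal_abs_rpow _ hp.le,
      enorm_rpow_eq_ofReal_abs_rpow _ hq.le, ← ENNReal.ofReal_add (by positivity) (by positivity),
      ← ENNReal.ofReal_mul' (by positivity)]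
    exact ENNReal.ofReal_le_ofReal (hfK _ _)
  calc ∫⁻ x, ‖f (u₁ x + u₂ x)‖ₑ ^ r ∂μ
      ≤ ∫⁻ x, ENNReal.ofReal K * (‖u₁ x‖ₑ ^ p + ‖u₂ x‖ₑ ^ q) ∂μ := lintegral_mono hpointwise
    _ = ENNReal.ofReal K * ((∫⁻ x, ‖u₁ x‖ₑ ^ p ∂μ) + ∫⁻ x, ‖u₂ x‖ₑ ^ q ∂μ) := by
      rw [lintegral_const_mul' _ _ ENNReal.ofReal_ne_top,
        lintegral_add_left' (hu₁.enorm.pow_const p)]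
    _ = _ := by
      rw [lintegral_rpow_enorm_eq_eLpNorm_ofReal_rpow hp,
        lintegral_rpow_enorm_eq_eLpNorm_ofReal_rpow hq]

lemma eLpNorm_comp_add_le {f : ℝ → ℝ} {p q r K M : ℝ} (hp : 0 < p) (hq : 0 < q) (hr : 0 < r)
    (hK : 0 ≤ K) (hM : 0 ≤ M) (hfK : ∀ a b, |f (a + b)| ^ r ≤ K * (|a| ^ p + |b| ^ q))
    {u₁ u₂ : α → ℝ} (hu₁ : AEMeasurable u₁ μ)
    (hM₁ : eLpNorm u₁ (ENNReal.ofReal p) μ ≤ ENNReal.ofReal M)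
    (hM₂ : eLpNorm u₂ (ENNReal.ofReal q) μ ≤ ENNReal.ofReal M) :
    eLpNorm (fun x => f (u₁ x + u₂ x)) (ENNReal.ofReal r) μ ≤
      ENNReal.ofReal ((K * (M ^ p + M ^ q)) ^ (1 / r)) := by
  rw [eLpNorm_ofReal_eq_lintegral hr, ← ENNReal.ofReal_rpow_of_nonneg (by positivity)
    (by positivity), ENNReal.ofReal_mul hK, ENNReal.ofReal_add (by positivity) (by positivity),
    ← ENNReal.ofReal_rpow_of_nonneg hM hp.le, ← ENNReal.ofReal_rpow_of_nonneg hM hq.le]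
  refine ENNReal.rpow_le_rpow ((lintegral_rpow_enorm_comp_add_le hp hq hr.le hfK hu₁).trans ?_)
    (by positivity)
  gcongr

end

lemma exists_eLpNorm_le_of_sumNorm_lt {N : ℕ} {p q M : ℝ} {u : EuclideanSpace ℝ (Fin N) → ℝ}
    (hdec : ∃ u₁ u₂ : EuclideanSpace ℝ (Fin N) → ℝ, u = u₁ + u₂ ∧
      MemLp u₁ (ENNReal.ofReal p) volume ∧ MemLp u₂ (ENNReal.ofReal q) volume)
    (hu : sumNorm N p q u < M) :
    ∃ u₁ u₂ : EuclideanSpace ℝ (Fin N) → ℝ, u = u₁ + u₂ ∧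
      MemLp u₁ (ENNReal.ofReal p) volume ∧ MemLp u₂ (ENNReal.ofReal q) volume ∧
      eLpNorm u₁ (ENNReal.ofReal p) volume ≤ ENNReal.ofReal M ∧
      eLpNorm u₂ (ENNReal.ofReal q) volume ≤ ENNReal.ofReal M := by
  obtain ⟨v₁, v₂, hv, hv₁, hv₂⟩ := hdec
  have hbdd : BddBelow {r : ℝ | ∃ u₁ u₂ : EuclideanSpace ℝ (Fin N) → ℝ, u = u₁ + u₂ ∧
      MemLp u₁ (ENNReal.ofReal p) volume ∧ MemLp u₂ (ENNReal.ofReal q) volume ∧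
      r = (eLpNorm u₁ (ENNReal.ofReal p) volume).toReal +
        (eLpNorm u₂ (ENNReal.ofReal q) volume).toReal} := by
    refine ⟨0, ?_⟩
    rintro r ⟨u₁, u₂, -, -, -, rfl⟩
    positivity
  obtain ⟨-, ⟨u₁, u₂, hu, hu₁, hu₂, rfl⟩, hlt⟩ :=
    (csInf_lt_iff hbdd ⟨_, v₁, v₂, hv, hv₁, hv₂, rfl⟩).1 hu
  have h₁ := ENNReal.toReal_nonneg (a := eLpNorm u₁ (ENNReal.ofReal p) volume)
  have h₂ := ENNReal.toReal_nonneg (a := eLpNorm u₂ (ENNReal.ofReal q) volume)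
  refine ⟨u₁, u₂, hu, hu₁, hu₂, ?_, ?_⟩
  · rw [ENNReal.le_ofReal_iff_toReal_le hu₁.2.ne (by linarith)]; linarith
  · rw [ENNReal.le_ofReal_iff_toReal_le hu₂.2.ne (by linarith)]; linarith

/-- `g'` maps bounded sets of `L^p + L^q` into bounded sets of `L^{p'} ∩ L^{q'}`. -/
theorem g'_bounded_map (N : ℕ) (p q c₁ : ℝ) (g g' : ℝ → ℝ)
    (hp : 2 < p) (hpq : p < q) (hc₁ : 0 < c₁)
    (hder : ∀ t, HasDerivAt g (g' t) t)
    (hbig : ∀ t : ℝ, 1 ≤ |t| → |g' t| ≤ c₁ * |t| ^ (p - 1))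
    (hsmall : ∀ t : ℝ, |t| ≤ 1 → |g' t| ≤ c₁ * |t| ^ (q - 1)) :
    ∀ M > (0:ℝ), ∃ C > 0, ∀ u : EuclideanSpace ℝ (Fin N) → ℝ,
      (∃ u₁ u₂ : EuclideanSpace ℝ (Fin N) → ℝ, u = u₁ + u₂ ∧
        MemLp u₁ (ENNReal.ofReal p) volume ∧ MemLp u₂ (ENNReal.ofReal q) volume) →
      sumNorm N p q u ≤ M →
      MemLp (fun x => g' (u x)) (ENNReal.ofReal (p / (p - 1))) volume ∧
      MemLp (fun x => g' (u x)) (ENNReal.ofReal (q / (q - 1))) volume ∧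
      (eLpNorm (fun x => g' (u x)) (ENNReal.ofReal (p / (p - 1))) volume).toReal +
        (eLpNorm (fun x => g' (u x)) (ENNReal.ofReal (q / (q - 1))) volume).toReal ≤ C := by
  have hp1 : 1 < p := by linarith
  have hg' : Measurable g' := by
    rw [show g' = deriv g from funext fun t => (hder t).deriv.symm]
    exact measurable_deriv g
  intro M hM
  let bound : ℝ → ℝ := fun r => (c₁ ^ r * 2 ^ q * ((M + 1) ^ p + (M + 1) ^ q)) ^ (1 / r)
  refine ⟨bound (p / (p - 1)) + bound (q / (q - 1)), by positivity, ?_⟩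
  intro u hdec hu
  obtain ⟨u₁, u₂, rfl, hu₁, hu₂, hM₁, hM₂⟩ :=
    exists_eLpNorm_le_of_sumNorm_lt hdec (hu.trans_lt (lt_add_one M))
  have hbound : ∀ r, q / (q - 1) ≤ r → r ≤ p / (p - 1) →
      MemLp (fun x => g' (u₁ x + u₂ x)) (ENNReal.ofReal r) volume ∧
      (eLpNorm (fun x => g' (u₁ x + u₂ x)) (ENNReal.ofReal r) volume).toReal ≤ bound r := by
    intro r hrq hrp
    have hr : 0 < r := (div_pos (by linarith) (by linarith)).trans_le hrq
    have hle := eLpNorm_comp_add_le (by linarith) (by linarith) hr (by positivity)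
      (by linarith) (abs_rpow_add_le_of_growth hp1 hpq.le hc₁.le hbig hsmall hrq hrp)
      hu₁.aemeasurable hM₁ hM₂
    refine ⟨⟨?_, hle.trans_lt ENNReal.ofReal_lt_top⟩, ENNReal.toReal_le_of_le_ofReal
      (by positivity) hle⟩
    exact (hg'.comp_aemeasurable (hu₁.aemeasurable.add hu₂.aemeasurable)).aestronglyMeasurable
  have hpq' := div_sub_one_le_div_sub_one hp1 hpq.le
  obtain ⟨hmem_p, hnorm_p⟩ := hbound _ hpq' le_rfl
  obtain ⟨hmem_q, hnorm_q⟩ := hbound _ le_rfl hpq'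
  exact ⟨hmem_p, hmem_q, add_le_add hnorm_p hnorm_q⟩
end
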